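/- arXiv:math/0208100 — 4 statements merged into one kernel-verified Lean document; each statement's English description precedes it below -/
import Mathlib

section
/- Let λ : ℝ → ℝ be smooth and positive with λ' ≥ 0, and let γ(t) = (φ(t), r(t)) be a unit-speed geodesic on the strip [0,π] × ℝ for the degenerate metric ds² = λ²(r) sin²φ (dr² + λ²(r) dφ²), satisfying the equations r'' = -2 (cos φ/sin φ) r' φ' - (λ'(r)/λ(r)) (r')² + 2 λ'(r) λ(r) (φ')² and (r')² + λ²(r)(φ')² = λ⁻²(r) sin⁻²φ, with 0 < φ(t) < π for all t. If r'(0) > 0, then r'(t) > 0 for all t > 0. -/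
/-- for a unit-speed geodesic `γ(t) = (φ(t), r(t))` of the
degenerate metric `λ²(r) sin²φ (dr² + λ²(r) dφ²)` on the strip `[0,π] × ℝ`
(with `λ` smooth positive, `λ' ≥ 0`, and `0 < φ < π`), if `r'(0) > 0` then
`r'(t) > 0` for all `t > 0`. -/
theorem rprime_stays_positive
    (lam φ r : ℝ → ℝ)
    (hlam : ContDiff ℝ (⊤ : ℕ∞) lam) (hφ : ContDiff ℝ (⊤ : ℕ∞) φ) (hr : ContDiff ℝ (⊤ : ℕ∞) r)
    (hlampos : ∀ s, 0 < lam s) (hlam' : ∀ s, 0 ≤ deriv lam s)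
    (hφrange : ∀ t, 0 < φ t ∧ φ t < Real.pi)
    (hgeo : ∀ t, deriv (deriv r) t =
        -2 * (Real.cos (φ t) / Real.sin (φ t)) * deriv r t * deriv φ t
        - (deriv lam (r t) / lam (r t)) * (deriv r t)^2
        + 2 * deriv lam (r t) * lam (r t) * (deriv φ t)^2)
    (hspeed : ∀ t, (deriv r t)^2 + (lam (r t))^2 * (deriv φ t)^2
        = ((lam (r t))^2)⁻¹ * ((Real.sin (φ t))^2)⁻¹)
    (h0 : 0 < deriv r 0) :
    ∀ t > 0, 0 < deriv r t := by
  -- sin (φ t) is positive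
  have hsin : ∀ t, 0 < Real.sin (φ t) := fun t =>
    Real.sin_pos_of_pos_of_lt_pi (hφrange t).1 (hφrange t).2
  -- differentiability facts
  have hrd : Differentiable ℝ r := hr.differentiable (by simp)
  have hφd : Differentiable ℝ φ := hφ.differentiable (by simp)
  have hlamd : Differentiable ℝ lam := hlam.differentiable (by simp)
  have hr'd : Differentiable ℝ (deriv r) :=
    (contDiff_infty_iff_deriv.mp (hr.of_le (by simp))).2.differentiable (by simp)
  set g : ℝ → ℝ := fun t => lam (r t) * (Real.sin (φ t))^2 * deriv r t with hg
  have hgder : ∀ t, HasDerivAt g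
      (2 * deriv lam (r t) * (lam (r t))^2 * (Real.sin (φ t))^2 * (deriv φ t)^2) t := by
    intro t
    have h1 : HasDerivAt (fun t => lam (r t)) (deriv lam (r t) * deriv r t) t :=
      (hlamd (r t)).hasDerivAt.comp t (hrd t).hasDerivAt
    have h2 : HasDerivAt (fun t => (Real.sin (φ t))^2)
        (2 * (Real.sin (φ t))^(2-1) * (Real.cos (φ t) * deriv φ t)) t :=
      (((Real.hasDerivAt_sin (φ t)).comp t (hφd t).hasDerivAt)).pow 2
    have h3 : HasDerivAt (deriv r) (deriv (deriv r) t) t := (hr'd t).hasDerivAt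
    have h := (h1.mul h2).mul h3
    refine h.congr_deriv ?_
    simp only [Pi.mul_apply]
    rw [hgeo t]
    have hs := (hsin t).ne'
    have hl := (hlampos (r t)).ne'
    field_simp
    ring
  have hgdiff : Differentiable ℝ g := fun t => (hgder t).differentiableAt
  have hgmono : Monotone g := by
    apply monotone_of_deriv_nonneg hgdiff
    intro t
    rw [(hgder t).deriv]
    have : (0:ℝ) ≤ 2 * deriv lam (r t) := by linarith [hlam' (r t)]
    positivity
  intro t ht
  have hg0 : 0 < g 0 := by
    have := hsin 0
    have := hlampos (r 0)
    simp only [hg]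
    positivity
  have hgt : 0 < g t := lt_of_lt_of_le hg0 (hgmono ht.le)
  by_contra hcon
  push_neg at hcon
  have : g t ≤ 0 := by
    simp only [hg]
    have h1 := hsin t
    have h2 := hlampos (r t)
    exact mul_nonpos_of_nonneg_of_nonpos (by positivity) hcon
  linarith
end

section
/- Let φ, r be smooth with 0 < φ < π and r' > 0, λ smooth positive with λ' ≥ 0, satisfying the geodesic ODE r'' = -2 (cos φ/sin φ) r' φ' - (λ'/λ)(r')² + 2 λ' λ (φ')². Then (d/dt) log r'(t) ≥ (d/dt) log(sin⁻²φ(t)) − (λ'(r(t))/λ(r(t))) r'(t). -/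
/-- for a geodesic `(φ(t), r(t))` of the degenerate metric with
`0 < φ < π`, `r' > 0`, `λ` smooth positive with `λ' ≥ 0`, satisfying
`r'' = -2 (cos φ/sin φ) r' φ' - (λ'/λ)(r')² + 2 λ' λ (φ')²`, one has
`(d/dt) log r' ≥ (d/dt) log(sin⁻²φ) − (λ'(r)/λ(r)) r'`. -/
theorem log_rprime_derivative_bound
    (lam φ r : ℝ → ℝ)
    (hlam : ContDiff ℝ (⊤ : ℕ∞) lam) (hφ : ContDiff ℝ (⊤ : ℕ∞) φ) (hr : ContDiff ℝ (⊤ : ℕ∞) r)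
    (hlampos : ∀ s, 0 < lam s) (hlam' : ∀ s, 0 ≤ deriv lam s)
    (hφrange : ∀ t, 0 < φ t ∧ φ t < Real.pi)
    (hr' : ∀ t, 0 < deriv r t)
    (hgeo : ∀ t, deriv (deriv r) t =
        -2 * (Real.cos (φ t) / Real.sin (φ t)) * deriv r t * deriv φ t
        - (deriv lam (r t) / lam (r t)) * (deriv r t)^2
        + 2 * deriv lam (r t) * lam (r t) * (deriv φ t)^2) :
    ∀ t, deriv (fun s => Real.log (deriv r s)) t ≥
        deriv (fun s => Real.log (((Real.sin (φ s))^2)⁻¹)) t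
        - (deriv lam (r t) / lam (r t)) * deriv r t := by
  intro t
  have hsin : ∀ s, 0 < Real.sin (φ s) := fun s =>
    Real.sin_pos_of_pos_of_lt_pi (hφrange s).1 (hφrange s).2
  -- derivative of log (deriv r)
  have hdr : HasDerivAt (deriv r) (deriv (deriv r) t) t :=
    (((contDiff_infty_iff_deriv.mp (hr.of_le (by simp))).2).differentiable (by simp) t).hasDerivAt
  have h1 : HasDerivAt (fun s => Real.log (deriv r s))
      ((deriv r t)⁻¹ * deriv (deriv r) t) t :=
    (Real.hasDerivAt_log (hr' t).ne').comp t hdr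
  -- rewrite the second function
  have hfun : (fun s => Real.log (((Real.sin (φ s))^2)⁻¹)) =
      fun s => -(2 * Real.log (Real.sin (φ s))) := by
    funext s
    rw [Real.log_inv, Real.log_pow]
    push_cast; ring
  have hφd : HasDerivAt φ (deriv φ t) t := (hφ.differentiable (by simp) t).hasDerivAt
  have hsind : HasDerivAt (fun s => Real.sin (φ s)) (Real.cos (φ t) * deriv φ t) t :=
    (Real.hasDerivAt_sin (φ t)).comp t hφd
  have h2 : HasDerivAt (fun s => Real.log (((Real.sin (φ s))^2)⁻¹))
      (-(2 * ((Real.sin (φ t))⁻¹ * (Real.cos (φ t) * deriv φ t)))) t := by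
    rw [hfun]
    exact (((Real.hasDerivAt_log (hsin t).ne').comp t hsind).const_mul 2).neg
  rw [h1.deriv, h2.deriv, hgeo t]
  have hrt := hr' t
  have hst := hsin t
  have hc : 0 ≤ 2 * deriv lam (r t) * lam (r t) * (deriv φ t)^2 := by
    have := hlam' (r t); have := (hlampos (r t)).le; positivity
  rw [ge_iff_le, ← sub_nonneg]
  have key : (deriv r t)⁻¹ *
      (-2 * (Real.cos (φ t) / Real.sin (φ t)) * deriv r t * deriv φ t
        - deriv lam (r t) / lam (r t) * (deriv r t)^2
        + 2 * deriv lam (r t) * lam (r t) * (deriv φ t)^2)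
      - (-(2 * ((Real.sin (φ t))⁻¹ * (Real.cos (φ t) * deriv φ t)))
        - deriv lam (r t) / lam (r t) * deriv r t)
      = (deriv r t)⁻¹ * (2 * deriv lam (r t) * lam (r t) * (deriv φ t)^2) := by
    field_simp
    ring
  rw [key]
  positivity
end

section
/- Let λ be the backward-in-time solution of the ODE λ'' = η/(4λ) with initial data λ(0) = sin ε > 0 and λ'(0) = cos ε > 0, where η > 0 and 0 < ε < π/2. Let -K = inf { t ≤ 0 : λ > 0 and λ' > 0 on (t, 0] }. Then -K is finite, λ(-K) > 0, and λ'(-K) = 0. -/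
/-!
While `λ` and `λ'` are positive on `(t, 0]`, `λ` is increasing, so `λ ≤ λ(0)` and
`λ'' ≥ η / (4 λ(0))` there; since `λ'` stays positive, the interval has length at most
`4 λ(0) λ'(0) / η`, so `-K` is finite. The energy `λ'² - (η/2) log λ` is conserved, which bounds
`λ` below by `λ(0) exp(-2 λ'(0)² / η)` on `(-K, 0]`, hence `λ(-K) > 0`. Finally `λ'(-K) ≥ 0` by
continuity, and `λ'(-K) > 0` would let the interval of positivity extend past `-K`.
-/

open Set Real

noncomputable def odeEnergy (η : ℝ) (f f' : ℝ → ℝ) (x : ℝ) : ℝ := f' x ^ 2 - η / 2 * log (f x)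

section NeckODE

variable {η a b x : ℝ} {f f' : ℝ → ℝ}

theorem hasDerivAt_odeEnergy (hf : HasDerivAt f (f' x) x)
    (hf' : HasDerivAt f' (η / (4 * f x)) x) (hpos : 0 < f x) :
    HasDerivAt (odeEnergy η f f') 0 x := by
  have h : HasDerivAt (odeEnergy η f f')
      (2 * f' x * (η / (4 * f x)) - η / 2 * (f' x / f x)) x := by
    unfold odeEnergy
    simpa using (hf'.fun_pow 2).fun_sub ((hf.log hpos.ne').const_mul (η / 2))
  convert h using 1
  field_simp
  ring

theorem odeEnergy_eq (hab : a ≤ b) (hf : ∀ x ∈ Icc a b, HasDerivAt f (f' x) x)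
    (hf' : ∀ x ∈ Icc a b, HasDerivAt f' (η / (4 * f x)) x) (hpos : ∀ x ∈ Icc a b, 0 < f x) :
    odeEnergy η f f' b = odeEnergy η f f' a := by
  have hE : ∀ x ∈ Icc a b, HasDerivAt (odeEnergy η f f') 0 x := fun x hx =>
    hasDerivAt_odeEnergy (hf x hx) (hf' x hx) (hpos x hx)
  exact constant_of_has_deriv_right_zero (fun x hx => (hE x hx).continuousAt.continuousWithinAt)
    (fun x hx => (hE x (Ico_subset_Icc_self hx)).hasDerivWithinAt) b (right_mem_Icc.2 hab)

theorem mul_exp_le_of_ode (hη : 0 < η) (hab : a ≤ b) (hf : ∀ x ∈ Icc a b, HasDerivAt f (f' x) x)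
    (hf' : ∀ x ∈ Icc a b, HasDerivAt f' (η / (4 * f x)) x) (hpos : ∀ x ∈ Icc a b, 0 < f x) :
    f b * exp (-(2 * f' b ^ 2 / η)) ≤ f a := by
  have hfa := hpos a (left_mem_Icc.2 hab)
  have hfb := hpos b (right_mem_Icc.2 hab)
  have hE := odeEnergy_eq hab hf hf' hpos
  simp only [odeEnergy] at hE
  have hlog : log (f b) - 2 * f' b ^ 2 / η ≤ log (f a) := by
    rw [sub_le_iff_le_add, ← sub_le_iff_le_add', le_div_iff₀ hη]
    nlinarith [sq_nonneg (f' a)]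
  calc f b * exp (-(2 * f' b ^ 2 / η)) = exp (log (f b) - 2 * f' b ^ 2 / η) := by
        rw [sub_eq_add_neg, exp_add, exp_log hfb]
    _ ≤ exp (log (f a)) := exp_le_exp.2 hlog
    _ = f a := exp_log hfa

theorem mul_sub_lt_of_ode (hη : 0 ≤ η) (hab : a ≤ b) (hf : ∀ x ∈ Icc a b, HasDerivAt f (f' x) x)
    (hf' : ∀ x ∈ Icc a b, HasDerivAt f' (η / (4 * f x)) x) (hpos : ∀ x ∈ Icc a b, 0 < f x)
    (hinc : ∀ x ∈ Icc a b, 0 < f' x) :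
    η * (b - a) < 4 * f b * f' b := by
  have hfb := hpos b (right_mem_Icc.2 hab)
  have hsub : interior (Icc a b) ⊆ Icc a b := interior_subset
  have hmono : MonotoneOn f (Icc a b) :=
    monotoneOn_of_hasDerivWithinAt_nonneg (convex_Icc a b)
      (fun x hx => (hf x hx).continuousAt.continuousWithinAt)
      (fun x hx => (hf x (hsub hx)).hasDerivWithinAt) (fun x hx => (hinc x (hsub hx)).le)
  set c := η / (4 * f b)
  have hg : MonotoneOn (fun x => f' x - c * x) (Icc a b) := by
    refine monotoneOn_of_hasDerivWithinAt_nonneg (f' := fun x => η / (4 * f x) - c)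
      (convex_Icc a b) (fun x hx => ?_) (fun x hx => ?_) (fun x hx => ?_)
    · exact ((hf' x hx).sub ((hasDerivAt_id x).const_mul c)).continuousAt.continuousWithinAt
    · simpa using ((hf' x (hsub hx)).fun_sub ((hasDerivAt_id x).const_mul c)).hasDerivWithinAt
    · have hx := hsub hx
      have hfx := hpos x hx
      have : f x ≤ f b := hmono hx (right_mem_Icc.2 hab) hx.2
      exact sub_nonneg.2 (div_le_div_of_nonneg_left hη (by positivity) (by linarith))
  have hgab := hg (left_mem_Icc.2 hab) (right_mem_Icc.2 hab) hab
  have hfa' := hinc a (left_mem_Icc.2 hab)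
  have : c * (b - a) < f' b := by simp only at hgab; linarith
  rwa [div_mul_eq_mul_div, div_lt_iff₀ (by positivity), mul_comm (f' b)] at this

end NeckODE

def leftEndpoints (p : ℝ → Prop) (b : ℝ) : Set ℝ := {t | t ≤ b ∧ ∀ s ∈ Ioc t b, p s}

namespace leftEndpoints

variable {p : ℝ → Prop} {b : ℝ}

theorem self_mem : b ∈ leftEndpoints p b :=
  ⟨le_rfl, fun _ hs => absurd hs.2 hs.1.not_ge⟩

theorem forall_mem_Ioc_sInf (hbdd : BddBelow (leftEndpoints p b)) :
    ∀ s ∈ Ioc (sInf (leftEndpoints p b)) b, p s := by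
  intro s hs
  obtain ⟨t, ht, hts⟩ := (csInf_lt_iff hbdd ⟨b, self_mem⟩).1 hs.1
  exact ht.2 s ⟨hts, hs.2⟩

theorem sInf_lt (hp : IsOpen {s | p s}) (hb : p b) (hbdd : BddBelow (leftEndpoints p b)) :
    sInf (leftEndpoints p b) < b := by
  obtain ⟨l, u, ⟨hlb, hbu⟩, hlu⟩ := mem_nhds_iff_exists_Ioo_subset.1 (hp.mem_nhds hb)
  obtain ⟨t, hlt, htb⟩ := exists_between hlb
  have ht : t ∈ leftEndpoints p b :=
    ⟨htb.le, fun s hs => hlu ⟨hlt.trans hs.1, hs.2.trans_lt hbu⟩⟩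
  exact (csInf_le hbdd ht).trans_lt htb

theorem not_sInf (hp : IsOpen {s | p s}) (hbdd : BddBelow (leftEndpoints p b)) :
    ¬ p (sInf (leftEndpoints p b)) := by
  set T := sInf (leftEndpoints p b)
  intro hT
  obtain ⟨l, u, ⟨hlT, hTu⟩, hlu⟩ := mem_nhds_iff_exists_Ioo_subset.1 (hp.mem_nhds hT)
  obtain ⟨t, hlt, htT⟩ := exists_between hlT
  have hTb : T ≤ b := csInf_le hbdd self_mem
  have ht : t ∈ leftEndpoints p b := by
    refine ⟨htT.le.trans hTb, fun s hs => ?_⟩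
    rcases le_or_gt s T with hsT | hTs
    · exact hlu ⟨hlt.trans hs.1, hsT.trans_lt hTu⟩
    · exact forall_mem_Ioc_sInf hbdd s ⟨hTs, hs.2⟩
  exact (csInf_le hbdd ht).not_gt htT

end leftEndpoints

theorem le_of_forall_mem_Ioc_le {g : ℝ → ℝ} (hg : Continuous g) {a b c : ℝ} (hab : a < b)
    (h : ∀ s ∈ Ioc a b, c ≤ g s) : c ≤ g a := by
  have hcl : closure (Ioc a b) ⊆ {s | c ≤ g s} :=
    (isClosed_le continuous_const hg).closure_subset_iff.2 h
  rw [closure_Ioc hab.ne] at hcl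
  exact hcl (left_mem_Icc.2 hab.le)

section Stopping

variable {η : ℝ} {f f' : ℝ → ℝ}

theorem bddBelow_leftEndpoints_of_ode (hη : 0 < η) (hf : ∀ x, HasDerivAt f (f' x) x)
    (hf' : ∀ x ≤ 0, 0 < f x → HasDerivAt f' (η / (4 * f x)) x) (h0 : 0 < f 0) (h0' : 0 < f' 0) :
    BddBelow (leftEndpoints (fun s => 0 < f s ∧ 0 < f' s) 0) := by
  refine ⟨-(4 * f 0 * f' 0) / η, fun t ht => not_lt.1 fun htB => ?_⟩
  have hB : -(4 * f 0 * f' 0) / η ≤ 0 := div_nonpos_of_nonpos_of_nonneg (by nlinarith) hη.le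
  have hIcc : Icc (-(4 * f 0 * f' 0) / η) 0 ⊆ Ioc t 0 := Icc_subset_Ioc_iff hB |>.2 ⟨htB, le_rfl⟩
  have hp := fun x hx => ht.2 x (hIcc hx)
  have := mul_sub_lt_of_ode hη.le hB (fun x _ => hf x) (fun x hx => hf' x hx.2 (hp x hx).1)
    (fun x hx => (hp x hx).1) (fun x hx => (hp x hx).2)
  field_simp at this
  linarith

theorem mul_exp_le_of_mem_Ioc_sInf (hη : 0 < η) (hf : ∀ x, HasDerivAt f (f' x) x)
    (hf' : ∀ x ≤ 0, 0 < f x → HasDerivAt f' (η / (4 * f x)) x)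
    (hbdd : BddBelow (leftEndpoints (fun s => 0 < f s ∧ 0 < f' s) 0)) :
    ∀ s ∈ Ioc (sInf (leftEndpoints (fun s => 0 < f s ∧ 0 < f' s) 0)) 0,
      f 0 * exp (-(2 * f' 0 ^ 2 / η)) ≤ f s := by
  intro s hs
  have hp := fun x (hx : x ∈ Icc s 0) =>
    leftEndpoints.forall_mem_Ioc_sInf hbdd x ⟨hs.1.trans_le hx.1, hx.2⟩
  exact mul_exp_le_of_ode hη hs.2 (fun x _ => hf x) (fun x hx => hf' x hx.2 (hp x hx).1)
    (fun x hx => (hp x hx).1)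

end Stopping

/-- let `λ` solve `λ'' = η/(4λ)` backward in time with
`λ(0) = sin ε > 0`, `λ'(0) = cos ε > 0`, and let
`-K = inf { t ≤ 0 : λ > 0 and λ' > 0 on (t, 0] }`.  Then `-K` is finite
(the set is bounded below and `-K < 0`), `λ(-K) > 0`, and `λ'(-K) = 0`. -/
theorem neck_ode_stops
    (η ε : ℝ) (hη : 0 < η) (hε : 0 < ε) (hε' : ε < Real.pi / 2)
    (lam : ℝ → ℝ) (hsm : ContDiff ℝ 2 lam)
    (h0 : lam 0 = Real.sin ε) (h0' : deriv lam 0 = Real.cos ε)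
    (hode : ∀ t ≤ 0, 0 < lam t → deriv (deriv lam) t = η / (4 * lam t)) :
    BddBelow {t : ℝ | t ≤ 0 ∧ ∀ s ∈ Set.Ioc t 0, 0 < lam s ∧ 0 < deriv lam s} ∧
    sInf {t : ℝ | t ≤ 0 ∧ ∀ s ∈ Set.Ioc t 0, 0 < lam s ∧ 0 < deriv lam s} < 0 ∧
    0 < lam (sInf {t : ℝ | t ≤ 0 ∧ ∀ s ∈ Set.Ioc t 0, 0 < lam s ∧ 0 < deriv lam s}) ∧
    deriv lam (sInf {t : ℝ | t ≤ 0 ∧ ∀ s ∈ Set.Ioc t 0, 0 < lam s ∧ 0 < deriv lam s}) = 0 := by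
  obtain ⟨hdiff, -, hsm'⟩ := contDiff_succ_iff_deriv (n := 1).1 hsm
  have hd1 : ∀ x, HasDerivAt lam (deriv lam x) x := fun x => (hdiff x).hasDerivAt
  have hd2 : ∀ x ≤ 0, 0 < lam x → HasDerivAt (deriv lam) (η / (4 * lam x)) x := fun x hx hpos =>
    hode x hx hpos ▸ (hsm'.differentiable one_ne_zero x).hasDerivAt
  have hp0 : 0 < lam 0 ∧ 0 < deriv lam 0 := by
    rw [h0, h0']
    exact ⟨sin_pos_of_pos_of_lt_pi hε (by linarith [pi_pos]), cos_pos_of_mem_Ioo ⟨by linarith, hε'⟩⟩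
  have hopen : IsOpen {s | 0 < lam s ∧ 0 < deriv lam s} :=
    (isOpen_lt continuous_const hdiff.continuous).inter
      (isOpen_lt continuous_const hsm'.continuous)
  have hbdd := bddBelow_leftEndpoints_of_ode hη hd1 hd2 hp0.1 hp0.2
  have hT := leftEndpoints.sInf_lt hopen hp0 hbdd
  have hlamT : 0 < lam (sInf (leftEndpoints (fun s => 0 < lam s ∧ 0 < deriv lam s) 0)) :=
    (mul_pos hp0.1 (exp_pos _)).trans_le <|
      le_of_forall_mem_Ioc_le hdiff.continuous hT (mul_exp_le_of_mem_Ioc_sInf hη hd1 hd2 hbdd)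
  have hderivT := le_of_forall_mem_Ioc_le hsm'.continuous hT fun s hs =>
    (leftEndpoints.forall_mem_Ioc_sInf hbdd s hs).2.le
  exact ⟨hbdd, hT, hlamT,
    le_antisymm (not_lt.1 fun h => leftEndpoints.not_sInf hopen hbdd ⟨hlamT, h⟩) hderivT⟩
end

section
/- Let λ : (-∞, 0] → (0, ∞) be C² with λ'' = η/(4λ) for some η > 0, λ(0) = sin ε, λ'(0) = cos ε, and suppose 0 < λ'(t) ≤ cos ε for all t < 0. Then it cannot happen that λ(t) → 0 as t ↓ -K for a finite K; more precisely, if λ' > 0 on (-K, 0] then ∫_{-K}^0 dt/(4λ(t)) ≤ cos ε, and via the substitution τ = λ(t) this forces inf_{(-K,0]} λ > 0. -/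
/-!
Integrating `λ'' = η / (4λ)` from `s` to `0` gives `∫ₛ⁰ η / (4λ) = λ'(0) - λ'(s) ≤ cos ε`
as long as `λ'(s) ≥ 0`. Since `λ' ≤ cos ε`, the integrand dominates
`(η / (4 cos ε)) · λ'/λ = (η / (4 cos ε)) · (log λ)'`, so `log λ(0) - log λ(s) ≤ 4 cos² ε / η`,
that is `λ(s) ≥ λ(0) · exp (-4 cos² ε / η)` uniformly on `(-K, 0]`.
-/

open Real Set intervalIntegral

theorem integral_eq_deriv_sub_of_eqOn_deriv_deriv {f g : ℝ → ℝ} {a b : ℝ} (hf : ContDiff ℝ 2 f)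
    (hg : EqOn (deriv (deriv f)) g (uIoc a b)) :
    ∫ t in a..b, g t = deriv f b - deriv f a := by
  have hf' : ContDiff ℝ 1 (deriv f) := hf.iterate_deriv' 1 1
  rw [← integral_congr_ae (Filter.Eventually.of_forall fun t ht => hg ht),
    integral_deriv_eq_sub (fun t _ => (hf'.differentiable one_ne_zero).differentiableAt)
      ((hf'.continuous_deriv le_rfl).intervalIntegrable _ _)]

theorem integral_deriv_div_eq_log_sub {f : ℝ → ℝ} {a b : ℝ} (hf : ContDiff ℝ 1 f)
    (hne : ∀ t ∈ uIcc a b, f t ≠ 0) :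
    ∫ t in a..b, deriv f t / f t = log (f b) - log (f a) :=
  integral_eq_sub_of_hasDerivAt
    (fun t ht => ((hf.differentiable one_ne_zero) t).hasDerivAt.log (hne t ht))
    (((hf.continuous_deriv le_rfl).continuousOn.div hf.continuous.continuousOn
      hne).intervalIntegrable)

theorem log_sub_log_le_mul_integral_inv {f : ℝ → ℝ} {a b C : ℝ} (hf : ContDiff ℝ 1 f)
    (hab : a ≤ b) (hpos : ∀ t ∈ Icc a b, 0 < f t) (hC : ∀ t ∈ Icc a b, deriv f t ≤ C) :
    log (f b) - log (f a) ≤ C * ∫ t in a..b, (f t)⁻¹ := by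
  have hne : ∀ t ∈ uIcc a b, f t ≠ 0 := fun t ht => (hpos t (uIcc_of_le hab ▸ ht)).ne'
  have hinv : ContinuousOn (fun t => (f t)⁻¹) (uIcc a b) :=
    hf.continuous.continuousOn.inv₀ hne
  rw [← integral_deriv_div_eq_log_sub hf hne, ← integral_const_mul]
  refine integral_mono_on hab ?_ (hinv.const_smul C).intervalIntegrable fun t ht => ?_
  · exact ((hf.continuous_deriv le_rfl).continuousOn.div hf.continuous.continuousOn
      hne).intervalIntegrable
  · rw [div_eq_mul_inv]
    exact mul_le_mul_of_nonneg_right (hC t ht) (inv_pos.2 (hpos t ht)).le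

theorem mul_exp_neg_le_of_log_sub_log_le {x y M : ℝ} (hx : 0 < x) (hy : 0 < y)
    (h : log x - log y ≤ M) : x * exp (-M) ≤ y :=
  calc x * exp (-M) = exp (log x - M) := by rw [exp_sub, exp_log hx, exp_neg, div_eq_mul_inv]
    _ ≤ exp (log y) := exp_le_exp.2 (by linarith)
    _ = y := exp_log hy

theorem neck_ode_integral_bound_general
    (η ε K : ℝ) (hη : 0 < η) (hK : 0 < K)
    (lam : ℝ → ℝ) (hsm : ContDiff ℝ 2 lam)
    (h0' : deriv lam 0 = Real.cos ε)
    (hpos : ∀ t ∈ Set.Ioc (-K) 0, 0 < lam t)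
    (hd : ∀ t ∈ Set.Ioc (-K) 0, 0 < deriv lam t ∧ deriv lam t ≤ Real.cos ε)
    (hode : ∀ t ∈ Set.Ioc (-K) 0, deriv (deriv lam) t = η / (4 * lam t)) :
    (∫ t in (-K)..0, η / (4 * lam t)) ≤ Real.cos ε ∧
    ∃ c > 0, ∀ t ∈ Set.Ioc (-K) 0, c ≤ lam t := by
  have hint : ∀ s ∈ Icc (-K) 0, 0 ≤ deriv lam s → ∫ t in s..0, η / (4 * lam t) ≤ cos ε := by
    intro s hs hs'
    have := integral_eq_deriv_sub_of_eqOn_deriv_deriv hsm fun t ht =>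
      hode t ⟨hs.1.trans_lt (uIoc_of_le hs.2 ▸ ht).1, (uIoc_of_le hs.2 ▸ ht).2⟩
    linarith
  have hK' : 0 ≤ deriv lam (-K) := by
    refine closure_minimal (fun t ht => (hd t ht).1.le)
      (isClosed_le continuous_const (hsm.continuous_deriv one_le_two)) ?_
    rw [closure_Ioc (by linarith)]
    exact left_mem_Icc.2 (by linarith)
  refine ⟨hint (-K) (left_mem_Icc.2 (by linarith)) hK', ?_⟩
  have hcos : 0 < cos ε := h0' ▸ (hd 0 ⟨by linarith, le_rfl⟩).1
  have hlam0 : 0 < lam 0 := hpos 0 ⟨by linarith, le_rfl⟩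
  refine ⟨lam 0 * exp (-(cos ε * (4 * cos ε / η))), by positivity, fun s hs => ?_⟩
  have hsub : Icc s 0 ⊆ Ioc (-K) 0 := fun t ht => ⟨hs.1.trans_le ht.1, ht.2⟩
  have hinv : ∫ t in s..0, (lam t)⁻¹ ≤ 4 * cos ε / η := by
    have h := hint s ⟨hs.1.le, hs.2⟩ (hd s hs).1.le
    simp_rw [fun t => show η / (4 * lam t) = η / 4 * (lam t)⁻¹ by ring, integral_const_mul] at h
    rw [le_div_iff₀ hη]
    linarith
  have hlog := log_sub_log_le_mul_integral_inv (hsm.of_le one_le_two) hs.2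
    (fun t ht => hpos t (hsub ht)) (fun t ht => (hd t (hsub ht)).2)
  exact mul_exp_neg_le_of_log_sub_log_le hlam0 (hpos s hs)
    (hlog.trans (mul_le_mul_of_nonneg_left hinv hcos.le))

/-- let `λ : (-∞,0] → (0,∞)` be C² with `λ'' = η/(4λ)` (`η > 0`),
`λ(0) = sin ε`, `λ'(0) = cos ε`, and `0 < λ' ≤ cos ε` on `(-K, 0]`.  Then
`∫_{-K}^0 η dt/(4λ(t)) ≤ cos ε`, and (via the substitution `τ = λ(t)`) this
forces `inf_{(-K,0]} λ > 0`: `λ` cannot tend to `0` at `-K`. -/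
theorem neck_ode_integral_bound
    (η ε K : ℝ) (hη : 0 < η) (hε : 0 < ε) (hε' : ε < Real.pi / 2) (hK : 0 < K)
    (lam : ℝ → ℝ) (hsm : ContDiff ℝ 2 lam)
    (h0 : lam 0 = Real.sin ε) (h0' : deriv lam 0 = Real.cos ε)
    (hpos : ∀ t ∈ Set.Ioc (-K) 0, 0 < lam t)
    (hd : ∀ t ∈ Set.Ioc (-K) 0, 0 < deriv lam t ∧ deriv lam t ≤ Real.cos ε)
    (hode : ∀ t ∈ Set.Ioc (-K) 0, deriv (deriv lam) t = η / (4 * lam t)) :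
    (∫ t in (-K)..0, η / (4 * lam t)) ≤ Real.cos ε ∧
    ∃ c > 0, ∀ t ∈ Set.Ioc (-K) 0, c ≤ lam t :=
  neck_ode_integral_bound_general η ε K hη hK lam hsm h0' hpos hd hode
end
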